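/- For 1 ≤ k < l ≤ n, the number of binary strings of length n with no two adjacent 1's, with σ_k = 0 and σ_l = 1, equals F_{k+1} · F_{l-k} · F_{n-l+1}, and the number with σ_k = 1 and σ_l = 0 equals F_k · F_{l-k} · F_{n-l+2}. -/
import Mathlib

namespace FibCountAux

def NoAdj (σ : ℕ → Bool) : Prop := ∀ i : ℕ, ¬(σ i = true ∧ σ (i+1) = true)

lemma NoAdj.succ_false {σ : ℕ → Bool} (h : NoAdj σ) {i : ℕ} (hi : σ i = true) :
    σ (i+1) = false := by
  cases hx : σ (i+1)
  · rfl
  · exact absurd ⟨hi, hx⟩ (h i)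

lemma NoAdj.pred_false {σ : ℕ → Bool} (h : NoAdj σ) {i : ℕ} (hi : σ (i+1) = true) :
    σ i = false := by
  cases hx : σ i
  · rfl
  · exact absurd ⟨hx, hi⟩ (h i)

abbrev FreeP (m : ℕ) (P : (ℕ → Bool) → Prop) : Type :=
  {σ : ℕ → Bool // (∀ i, m ≤ i → σ i = false) ∧ NoAdj σ ∧ P σ}

abbrev Free (m : ℕ) : Type := FreeP m (fun _ => True)

instance (m : ℕ) (P : (ℕ → Bool) → Prop) : Finite (FreeP m P) := by
  apply Finite.of_injective (fun σ : FreeP m P => (fun i : Fin m => σ.1 i))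
  intro σ τ h
  apply Subtype.ext
  funext i
  by_cases hi : i < m
  · exact congrFun h ⟨i, hi⟩
  · rw [σ.2.1 i (le_of_not_gt hi), τ.2.1 i (le_of_not_gt hi)]

def free0Equiv : Free 0 ≃ Unit where
  toFun _ := ()
  invFun _ := ⟨fun _ => false, fun _ _ => rfl, fun _ => by simp, trivial⟩
  left_inv σ := Subtype.ext (funext fun i => (σ.2.1 i (Nat.zero_le i)).symm)
  right_inv _ := rfl

def free1Equiv : Free 1 ≃ Bool where
  toFun σ := σ.1 0
  invFun b := ⟨fun i => if i = 0 then b else false,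
    fun i hi => if_neg (by omega),
    fun i => by simp,
    trivial⟩
  left_inv σ := Subtype.ext (funext fun i => by
    dsimp only
    by_cases h : i = 0
    · simp [h]
    · rw [if_neg h, σ.2.1 i (by omega)])
  right_inv b := by simp

def stepEquiv (m : ℕ) : Free (m+2) ≃ Free (m+1) ⊕ Free m where
  toFun σ := if h : σ.1 (m+1) = true then
      .inr ⟨fun i => if i < m then σ.1 i else false,
        fun i hi => if_neg (by omega),
        fun i => by
          dsimp only
          by_cases h2 : i + 1 < m
          · rw [if_pos (by omega), if_pos h2]
            exact σ.2.2.1 i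
          · rw [if_neg h2]
            simp,
        trivial⟩
    else
      .inl ⟨σ.1,
        fun i hi => by
          rcases Nat.eq_or_lt_of_le hi with h' | h'
          · simpa [← h'] using h
          · exact σ.2.1 i h',
        σ.2.2.1, trivial⟩
  invFun x := match x with
    | .inl τ => ⟨τ.1, fun i hi => τ.2.1 i (by omega), τ.2.2.1, trivial⟩
    | .inr τ => ⟨fun i => if i = m+1 then true else if i < m then τ.1 i else false,
        fun i hi => by dsimp only; rw [if_neg (by omega), if_neg (by omega)],
        fun i => by
          dsimp only
          rintro ⟨ha, hb⟩
          by_cases h1 : i = m + 1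
          · rw [if_neg (by omega), if_neg (by omega)] at hb
            exact absurd hb (by simp)
          · by_cases h2 : i + 1 = m + 1
            · rw [if_neg h1, if_pos h2] at *
              rw [if_neg (by omega)] at ha
              exact absurd ha (by simp)
            · by_cases h3 : i + 1 < m
              · rw [if_neg h1, if_pos (by omega)] at ha
                rw [if_neg h2, if_pos h3] at hb
                exact τ.2.2.1 i ⟨ha, hb⟩
              · rw [if_neg h2, if_neg h3] at hb
                exact absurd hb (by simp),
        trivial⟩
  left_inv σ := by
    by_cases h : σ.1 (m+1) = true
    · simp only [h, dif_pos]
      apply Subtype.ext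
      funext i
      dsimp only
      by_cases h1 : i = m + 1
      · rw [if_pos h1, h1, h]
      · rw [if_neg h1]
        by_cases h2 : i < m
        · rw [if_pos h2, if_pos h2]
        · rw [if_neg h2]
          rcases Nat.lt_or_ge i (m+1) with h3 | h3
          · have hi : i = m := by omega
            subst hi
            exact (σ.2.2.1.pred_false h).symm
          · exact (σ.2.1 i (by omega)).symm
    · simp only [h, dif_neg]
      rfl
  right_inv x := by
    match x with
    | .inl τ =>
      have hf : τ.1 (m+1) = false := τ.2.1 (m+1) le_rfl
      simp only [hf]
      rfl
    | .inr τ =>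
      have ht : (if m+1 = m+1 then true else if m+1 < m then τ.1 (m+1) else false) = true :=
        if_pos rfl
      simp only [ht, dif_pos]
      apply congrArg Sum.inr
      apply Subtype.ext
      funext i
      dsimp only
      by_cases h1 : i < m
      · rw [if_pos h1, if_neg (by omega), if_pos h1]
      · rw [if_neg h1]
        exact (τ.2.1 i (by omega)).symm

lemma cardFree (m : ℕ) : Nat.card (Free m) = Nat.fib (m + 2) := by
  induction m using Nat.twoStepInduction with
  | zero => rw [Nat.card_congr free0Equiv]; simp
  | one =>
    rw [Nat.card_congr free1Equiv]
    simp only [Nat.card_eq_fintype_card, Fintype.card_bool]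
    decide
  | more m ih1 ih2 =>
    rw [Nat.card_congr (stepEquiv m), Nat.card_sum, ih1, ih2]
    show Nat.fib (m+3) + Nat.fib (m+2) = Nat.fib (m+2+2)
    rw [Nat.fib_add_two (n := m+2)]
    exact Nat.add_comm _ _

lemma cardFreePred (p : ℕ) : Nat.card (Free (p - 1)) = Nat.fib (p + 1) := by
  cases p with
  | zero => rw [cardFree]; decide
  | succ p =>
    rw [cardFree]
    have : p + 1 - 1 + 2 = p + 1 + 1 := by omega
    rw [this]



/-- Split a no-adjacent-ones string at a forced 0 at position `a`. -/
def split0 (a b : ℕ) (Q P : (ℕ → Bool) → Prop) :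
    FreeP (a+1+b) (fun σ => σ a = false ∧ Q (fun i => if i < a then σ i else false) ∧
      P (fun i => σ (a+1+i))) ≃ FreeP a Q × FreeP b P where
  toFun σ :=
    (⟨fun i => if i < a then σ.1 i else false,
      fun i hi => if_neg (by omega),
      fun i => by
        dsimp only
        by_cases h2 : i + 1 < a
        · rw [if_pos (by omega), if_pos h2]; exact σ.2.2.1 i
        · rw [if_neg h2]; simp,
      σ.2.2.2.2.1⟩,
     ⟨fun i => σ.1 (a+1+i),
      fun i hi => σ.2.1 _ (by omega),
      fun i => by
        dsimp only
        have := σ.2.2.1 (a+1+i)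
        rwa [show a+1+i+1 = a+1+(i+1) from by omega] at this,
      σ.2.2.2.2.2⟩)
  invFun x :=
    ⟨fun i => if i < a then x.1.1 i else if i = a then false else x.2.1 (i - (a+1)),
     fun i hi => by
       dsimp only
       rw [if_neg (by omega), if_neg (by omega)]
       exact x.2.2.1 _ (by omega),
     fun i => by
       dsimp only
       rintro ⟨ha, hb⟩
       by_cases h1 : i + 1 < a
       · rw [if_pos (by omega)] at ha
         rw [if_pos h1] at hb
         exact x.1.2.2.1 i ⟨ha, hb⟩
       · by_cases h2 : i + 1 = a
         · rw [if_neg h1, if_pos h2] at hb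
           exact absurd hb (by simp)
         · by_cases h3 : i = a
           · rw [if_neg (by omega), if_pos h3] at ha
             exact absurd ha (by simp)
           · by_cases h4 : i < a
             · omega
             · rw [if_neg h4, if_neg h3] at ha
               rw [if_neg (by omega), if_neg (by omega)] at hb
               have e1 : i + 1 - (a+1) = (i - (a+1)) + 1 := by omega
               rw [e1] at hb
               exact x.2.2.2.1 _ ⟨ha, hb⟩,
     by
       dsimp only
       refine ⟨by rw [if_neg (by omega), if_pos rfl], ?_, ?_⟩
       · have : (fun i => if i < a then (if i < a then x.1.1 i else
            if i = a then false else x.2.1 (i - (a+1))) else false) = x.1.1 := by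
           funext i
           by_cases h : i < a
           · rw [if_pos h, if_pos h]
           · rw [if_neg h, (x.1.2.1 i (by omega))]
         rw [this]
         exact x.1.2.2.2
       · have : (fun i => if a+1+i < a then x.1.1 (a+1+i) else
            if a+1+i = a then false else x.2.1 (a+1+i - (a+1))) = x.2.1 := by
           funext i
           rw [if_neg (by omega), if_neg (by omega),
             show a+1+i - (a+1) = i from by omega]
         rw [this]
         exact x.2.2.2.2⟩
  left_inv σ := by
    apply Subtype.ext
    funext i
    dsimp only
    by_cases h1 : i < a
    · rw [if_pos h1, if_pos h1]
    · rw [if_neg h1]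
      by_cases h2 : i = a
      · rw [if_pos h2, h2, σ.2.2.2.1]
      · rw [if_neg h2, show i - (a+1) = i - (a+1) from rfl]
        rw [show a+1+(i - (a+1)) = i from by omega]
  right_inv x := by
    apply Prod.ext
    · apply Subtype.ext
      funext i
      dsimp only
      by_cases h : i < a
      · rw [if_pos h, if_pos h]
      · rw [if_neg h, (x.1.2.1 i (by omega))]
    · apply Subtype.ext
      funext i
      dsimp only
      rw [if_neg (by omega), if_neg (by omega),
        show a+1+i - (a+1) = i from by omega]

/-- Split a no-adjacent-ones string at a forced 1 at position `p`. -/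
def split1 (p q : ℕ) :
    FreeP (p+1+q) (fun σ => σ p = true) ≃ Free (p-1) × Free (q-1) where
  toFun σ :=
    (⟨fun i => if i + 1 < p then σ.1 i else false,
      fun i hi => if_neg (by omega),
      fun i => by
        dsimp only
        by_cases h2 : i + 1 + 1 < p
        · rw [if_pos (by omega), if_pos h2]; exact σ.2.2.1 i
        · rw [if_neg h2]; simp,
      trivial⟩,
     ⟨fun i => σ.1 (p+2+i),
      fun i hi => σ.2.1 _ (by omega),
      fun i => by
        dsimp only
        have := σ.2.2.1 (p+2+i)
        rwa [show p+2+i+1 = p+2+(i+1) from by omega] at this,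
      trivial⟩)
  invFun x :=
    ⟨fun i => if i + 1 < p then x.1.1 i else if i = p then true
        else if i < p + 2 then false else x.2.1 (i - (p+2)),
     fun i hi => by
       dsimp only
       rw [if_neg (by omega), if_neg (by omega)]
       by_cases h5 : i < p + 2
       · rw [if_pos h5]
       · rw [if_neg h5]
         exact x.2.2.1 _ (by omega),
     fun i => by
       dsimp only
       rintro ⟨ha, hb⟩
       by_cases h1 : i + 1 + 1 < p
       · rw [if_pos (by omega)] at ha
         rw [if_pos h1] at hb
         exact x.1.2.2.1 i ⟨ha, hb⟩
       · by_cases h2 : i + 1 < p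
         · rw [if_neg h1, if_neg (by omega), if_pos (by omega)] at hb
           exact absurd hb (by simp)
         · by_cases h3 : i = p
           · rw [if_neg (by omega), if_neg (by omega)] at hb
             rw [if_pos (by omega)] at hb
             exact absurd hb (by simp)
           · by_cases h4 : i < p
             · rw [if_neg h2, if_neg h3, if_pos (by omega)] at ha
               exact absurd ha (by simp)
             · by_cases h5 : i < p + 2
               · rw [if_neg h2, if_neg h3, if_pos h5] at ha
                 exact absurd ha (by simp)
               · rw [if_neg h2, if_neg h3, if_neg h5] at ha
                 rw [if_neg (by omega), if_neg (by omega), if_neg (by omega)] at hb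
                 have e1 : i + 1 - (p+2) = (i - (p+2)) + 1 := by omega
                 rw [e1] at hb
                 exact x.2.2.2.1 _ ⟨ha, hb⟩,
     by
       dsimp only
       rw [if_neg (by omega), if_pos rfl]⟩
  left_inv σ := by
    apply Subtype.ext
    funext i
    dsimp only
    by_cases h1 : i + 1 < p
    · rw [if_pos h1, if_pos h1]
    · rw [if_neg h1]
      by_cases h2 : i = p
      · rw [if_pos h2, h2, σ.2.2.2]
      · rw [if_neg h2]
        by_cases h3 : i < p + 2
        · rw [if_pos h3]
          -- i = p - 1 or i = p + 1 : forced false neighbors of the 1 at p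
          rcases Nat.lt_or_ge i p with h4 | h4
          · have hi : i + 1 = p := by omega
            cases hx : σ.1 i
            · rfl
            · exact absurd ⟨hx, by rw [hi]; exact σ.2.2.2⟩ (σ.2.2.1 i)
          · have hi : i = p + 1 := by omega
            subst hi
            cases hx : σ.1 (p+1)
            · rfl
            · exact absurd ⟨σ.2.2.2, hx⟩ (σ.2.2.1 p)
        · rw [if_neg h3, show p+2+(i - (p+2)) = i from by omega]
  right_inv x := by
    apply Prod.ext
    · apply Subtype.ext
      funext i
      dsimp only
      by_cases h : i + 1 < p
      · rw [if_pos h, if_pos h]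
      · rw [if_neg h, (x.1.2.1 i (by omega))]
    · apply Subtype.ext
      funext i
      dsimp only
      rw [if_neg (by omega), if_neg (by omega), if_neg (by omega),
        show p+2+i - (p+2) = i from by omega]


lemma cardA' (A M B : ℕ) :
    Nat.card (FreeP (A+1+(M+1+B)) (fun σ => σ A = false ∧ σ (A+1+M) = true)) =
      Nat.fib (A+2) * (Nat.fib (M+1) * Nat.fib (B+1)) := by
  have e1 : (FreeP (A+1+(M+1+B)) (fun σ => σ A = false ∧ σ (A+1+M) = true)) ≃
      (FreeP (A+1+(M+1+B)) (fun σ => σ A = false ∧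
        (fun _ => True) (fun i => if i < A then σ i else false) ∧
        (fun τ => τ M = true) (fun i => σ (A+1+i)))) :=
    Equiv.subtypeEquivRight (fun σ => by
      constructor
      · rintro ⟨h1, h2, h3, h4⟩
        exact ⟨h1, h2, h3, trivial, h4⟩
      · rintro ⟨h1, h2, h3, -, h4⟩
        exact ⟨h1, h2, h3, h4⟩)
  rw [Nat.card_congr e1,
    Nat.card_congr (split0 A (M+1+B) (fun _ => True) (fun τ => τ M = true)), Nat.card_prod]
  rw [Nat.card_congr (split1 M B), Nat.card_prod]
  rw [cardFree A, cardFreePred M, cardFreePred B]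

lemma cardB' (A M B : ℕ) :
    Nat.card (FreeP ((A+1+M)+1+B) (fun σ => σ A = true ∧ σ (A+1+M) = false)) =
      Nat.fib (A+1) * Nat.fib (M+1) * Nat.fib (B+2) := by
  have e1 : (FreeP ((A+1+M)+1+B) (fun σ => σ A = true ∧ σ (A+1+M) = false)) ≃
      (FreeP ((A+1+M)+1+B) (fun σ => σ (A+1+M) = false ∧
        (fun τ => τ A = true) (fun i => if i < A+1+M then σ i else false) ∧
        (fun _ => True) (fun i => σ ((A+1+M)+1+i)))) :=
    Equiv.subtypeEquivRight (fun σ => by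
      constructor
      · rintro ⟨h1, h2, h3, h4⟩
        refine ⟨h1, h2, h4, ?_, trivial⟩
        show (if A < A+1+M then σ A else false) = true
        rw [if_pos (by omega)]
        exact h3
      · rintro ⟨h1, h2, h3, h4, -⟩
        refine ⟨h1, h2, ?_, h3⟩
        have h4' : (if A < A+1+M then σ A else false) = true := h4
        rwa [if_pos (by omega)] at h4')
  rw [Nat.card_congr e1,
    Nat.card_congr (split0 (A+1+M) B (fun τ => τ A = true) (fun _ => True)), Nat.card_prod]
  rw [Nat.card_congr (split1 A M), Nat.card_prod]
  rw [cardFree B, cardFreePred A, cardFreePred M]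

def finPad {n : ℕ} (σ : Fin n → Bool) : ℕ → Bool :=
  fun i => if h : i < n then σ ⟨i, h⟩ else false

def finEquiv (n : ℕ) (P : (ℕ → Bool) → Prop) :
    {σ : Fin n → Bool //
      (∀ i j : Fin n, (j : ℕ) = (i : ℕ) + 1 → ¬(σ i = true ∧ σ j = true)) ∧
      P (finPad σ)} ≃ FreeP n P where
  toFun σ := ⟨finPad σ.1,
    fun i hi => dif_neg (by omega),
    fun i => by
      rintro ⟨ha, hb⟩
      unfold finPad at ha hb
      by_cases h2 : i + 1 < n
      · rw [dif_pos h2] at hb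
        rw [dif_pos (by omega : i < n)] at ha
        exact σ.2.1 ⟨i, by omega⟩ ⟨i+1, h2⟩ rfl ⟨ha, hb⟩
      · rw [dif_neg h2] at hb
        exact absurd hb (by simp),
    σ.2.2⟩
  invFun τ := ⟨fun i => τ.1 i,
    fun i j hij => by
      intro hc
      apply τ.2.2.1 i
      rw [← hij]
      exact hc,
    by
      have : finPad (fun i : Fin n => τ.1 i) = τ.1 := by
        funext i
        unfold finPad
        by_cases h : i < n
        · rw [dif_pos h]
        · rw [dif_neg h, τ.2.1 i (by omega)]
      rw [this]
      exact τ.2.2.2⟩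
  left_inv σ := by
    apply Subtype.ext
    funext i
    show finPad σ.1 i.1 = σ.1 i
    unfold finPad
    rw [dif_pos i.2]
  right_inv τ := by
    apply Subtype.ext
    funext i
    show finPad (fun i : Fin n => τ.1 i) i = τ.1 i
    unfold finPad
    by_cases h : i < n
    · rw [dif_pos h]
    · rw [dif_neg h, τ.2.1 i (by omega)]

end FibCountAux

theorem fib_count_01_10 (n k l : ℕ) (hk : 1 ≤ k) (hkl : k < l) (hln : l ≤ n) :
    Nat.card {σ : Fin n → Bool //
      (∀ i j : Fin n, (j : ℕ) = (i : ℕ) + 1 → ¬(σ i = true ∧ σ j = true)) ∧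
      σ ⟨k - 1, by omega⟩ = false ∧ σ ⟨l - 1, by omega⟩ = true} =
    Nat.fib (k + 1) * Nat.fib (l - k) * Nat.fib (n - l + 1) ∧
    Nat.card {σ : Fin n → Bool //
      (∀ i j : Fin n, (j : ℕ) = (i : ℕ) + 1 → ¬(σ i = true ∧ σ j = true)) ∧
      σ ⟨k - 1, by omega⟩ = true ∧ σ ⟨l - 1, by omega⟩ = false} =
    Nat.fib k * Nat.fib (l - k) * Nat.fib (n - l + 2) := by
  open FibCountAux in
  constructor
  · have e0 : {σ : Fin n → Bool //
        (∀ i j : Fin n, (j : ℕ) = (i : ℕ) + 1 → ¬(σ i = true ∧ σ j = true)) ∧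
        σ ⟨k - 1, by omega⟩ = false ∧ σ ⟨l - 1, by omega⟩ = true} ≃
        {σ : Fin n → Bool //
        (∀ i j : Fin n, (j : ℕ) = (i : ℕ) + 1 → ¬(σ i = true ∧ σ j = true)) ∧
        (fun τ => τ (k-1) = false ∧ τ (l-1) = true) (finPad σ)} :=
      Equiv.subtypeEquivRight (fun σ => by
        simp only [and_congr_right_iff]
        intro _
        unfold finPad
        rw [dif_pos (by omega : k - 1 < n), dif_pos (by omega : l - 1 < n)])
    rw [Nat.card_congr e0,
      Nat.card_congr (finEquiv n (fun τ => τ (k-1) = false ∧ τ (l-1) = true))]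
    have hlen : n = (k-1)+1+((l-k-1)+1+(n-l)) := by omega
    have e1 : (FreeP n (fun τ => τ (k-1) = false ∧ τ (l-1) = true)) ≃
        (FreeP ((k-1)+1+((l-k-1)+1+(n-l)))
          (fun τ => τ (k-1) = false ∧ τ ((k-1)+1+(l-k-1)) = true)) := by
      rw [show (k-1)+1+(l-k-1) = l - 1 from by omega, ← hlen]
    rw [Nat.card_congr e1, cardA' (k-1) (l-k-1) (n-l)]
    rw [show k-1+2 = k+1 from by omega, show l-k-1+1 = l-k from by omega]
    ring
  · have e0 : {σ : Fin n → Bool //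
        (∀ i j : Fin n, (j : ℕ) = (i : ℕ) + 1 → ¬(σ i = true ∧ σ j = true)) ∧
        σ ⟨k - 1, by omega⟩ = true ∧ σ ⟨l - 1, by omega⟩ = false} ≃
        {σ : Fin n → Bool //
        (∀ i j : Fin n, (j : ℕ) = (i : ℕ) + 1 → ¬(σ i = true ∧ σ j = true)) ∧
        (fun τ => τ (k-1) = true ∧ τ (l-1) = false) (finPad σ)} :=
      Equiv.subtypeEquivRight (fun σ => by
        simp only [and_congr_right_iff]
        intro _
        unfold finPad
        rw [dif_pos (by omega : k - 1 < n), dif_pos (by omega : l - 1 < n)])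
    rw [Nat.card_congr e0,
      Nat.card_congr (finEquiv n (fun τ => τ (k-1) = true ∧ τ (l-1) = false))]
    have e1 : (FreeP n (fun τ => τ (k-1) = true ∧ τ (l-1) = false)) ≃
        (FreeP (((k-1)+1+(l-k-1))+1+(n-l))
          (fun τ => τ (k-1) = true ∧ τ ((k-1)+1+(l-k-1)) = false)) := by
      rw [show (k-1)+1+(l-k-1) = l - 1 from by omega,
        show l - 1 + 1 + (n-l) = n from by omega]
    rw [Nat.card_congr e1, cardB' (k-1) (l-k-1) (n-l)]
    rw [show k-1+1 = k from by omega, show l-k-1+1 = l-k from by omega]
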